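/- (Local dynamic regret bound for D-ODWDA.) Under exactly the hypotheses of the network dynamic regret theorem — row-stochastic P with stationary distribution π ∈ (0,1)^n, mixing bound |(P^k)_{ij} − π_j| ≤ γ^{⌊k/ν⌋} with γ ∈ (0,1) and integer ν ≥ 1, nonempty compact convex X ⊆ ℝ^m, 1-strongly convex ψ, convex differentiable losses f_{i,t} with ‖∇f_{i,t}(x)‖_* ≤ L on X, iterates y_{i,0} = 0, x_{i,0} ∈ X, y_{i,t+1} = Σ_j P_{ij} y_{j,t} + ∇f_{i,t}(x_{i,t}), x_{i,t+1} = Π(y_{i,t+1}, α) with α = β/T, minimizers x*_t of f_t = (1/n)Σ_i f_{i,t} over X for t = 1,…,T+1, a constant D ≥ 0 with ‖ȳ_t‖_* ≤ D for t = 1,…,T where ȳ_t = Σ_i π_i y_{i,t}, and a constant Y ≥ 0 such that for every i and t = 2,…,T+1 there is y*_{i,t} with x*_t = Π(y*_{i,t}, α) and ‖y*_{i,t}‖_* ≤ Y — for every agent j ∈ {1,…,n} the local dynamic regret R_T(j) = Σ_{t=1}^T (f_t(x_{j,t}) − f_t(x*_t)) satisfies R_T(j) ≤ βL²(n/(γ(1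 − γ^{1/ν})) + 2) + βL(D + Y) + L·V_T, where V_T = Σ_{t=1}^T ‖x*_{t+1} − x*_t‖. -/

import Mathlib

open Finset Filter Topology
open scoped RealInnerProductSpace

/-!
By convexity and the gradient bound, agent `j`'s regret in round `t` is at most
`L‖x_{j,t} - x*_t‖ ≤ L‖x_{j,t} - x*_{t+1}‖ + L‖x*_{t+1} - x*_t‖`, and the second terms sum to
`L·V_T`. Strong convexity of `ψ` makes the regularized projection `α`-Lipschitz from the dual
norm to the norm, so `‖x_{j,t} - x*_{t+1}‖ ≤ α (‖y_{j,t} - ȳ_t‖_* + ‖ȳ_t‖_* + ‖y*_{j,t+1}‖_*)`.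
Unrolling the recursion, `y_{j,t} - ȳ_t = Σ_{s<t} Σ_l ((P^{t-1-s})_{jl} - π_l) ∇f_{l,s}(x_{l,s})`
because `π` is stationary for every power of `P`; geometric mixing bounds the coefficients, giving
`‖y_{j,t} - ȳ_t‖_* ≤ L (2 + n / (γ (1 - γ^{1/ν})))`. Summing over the `T` rounds, `Tα = β`.
-/

theorem Seminorm.exists_pos_mul_norm_le {E : Type*} [NormedAddCommGroup E] [NormedSpace ℝ E]
    [FiniteDimensional ℝ E] (p : Seminorm ℝ E) (hp : ∀ a, p a = 0 → a = 0) :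
    ∃ c > 0, ∀ a, c * ‖a‖ ≤ p a := by
  obtain hE | hE := subsingleton_or_nontrivial E
  · exact ⟨1, one_pos, fun a => by simp [Subsingleton.elim a 0]⟩
  obtain ⟨a₀, ha₀, hmin⟩ := (isCompact_sphere (0 : E) 1).exists_isMinOn
    (NormedSpace.sphere_nonempty.mpr zero_le_one)
    p.convexOn.locallyLipschitz.continuous.continuousOn
  have ha₀0 : a₀ ≠ 0 := ne_zero_of_mem_unit_sphere ⟨a₀, ha₀⟩
  refine ⟨p a₀, (apply_nonneg p a₀).lt_of_ne fun h => ha₀0 (hp _ h.symm), fun a => ?_⟩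
  rcases eq_or_ne a 0 with rfl | ha
  · simp
  have hmem : ‖a‖⁻¹ • a ∈ Metric.sphere (0 : E) 1 := by simp [norm_smul, ha]
  have : p a₀ ≤ p (‖a‖⁻¹ • a) := hmin hmem
  rw [map_smul_eq_mul, norm_inv, norm_norm] at this
  rwa [le_inv_mul_iff₀ (norm_pos_iff.mpr ha), mul_comm] at this

section DualNorm

variable {E : Type*} [NormedAddCommGroup E] [InnerProductSpace ℝ E]

/-- A junk `sSup` unless the set is bounded above, which it is when `p` is a norm on a
finite-dimensional space (`Seminorm.exists_pos_mul_norm_le`). -/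
noncomputable def dualNorm (p : E → ℝ) (v : E) : ℝ := sSup {r : ℝ | ∃ a, p a ≤ 1 ∧ r = ⟪v, a⟫}

variable (p : Seminorm ℝ E)

theorem dualNorm_le {v : E} {b : ℝ} (h : ∀ a, p a ≤ 1 → ⟪v, a⟫ ≤ b) : dualNorm p v ≤ b :=
  csSup_le ⟨0, 0, by simp, by simp⟩ (by rintro _ ⟨a, ha, rfl⟩; exact h a ha)

variable [FiniteDimensional ℝ E] {p} (hp : ∀ a, p a = 0 → a = 0)
include hp

theorem inner_le_dualNorm (v : E) {a : E} (ha : p a ≤ 1) : ⟪v, a⟫ ≤ dualNorm p v := by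
  refine le_csSup ?_ ⟨a, ha, rfl⟩
  obtain ⟨c, hc, hcp⟩ := p.exists_pos_mul_norm_le hp
  refine ⟨‖v‖ / c, ?_⟩
  rintro _ ⟨b, hb, rfl⟩
  rw [le_div_iff₀ hc]
  calc ⟪v, b⟫ * c ≤ ‖v‖ * (c * ‖b‖) := by nlinarith [real_inner_le_norm v b, norm_nonneg v]
    _ ≤ ‖v‖ * 1 := by gcongr; exact (hcp b).trans hb
    _ = ‖v‖ := mul_one _

theorem abs_inner_le_dualNorm (v : E) {a : E} (ha : p a ≤ 1) : |⟪v, a⟫| ≤ dualNorm p v := by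
  refine abs_le.mpr ⟨?_, inner_le_dualNorm hp v ha⟩
  have := inner_le_dualNorm hp v (a := -a) (by rwa [map_neg_eq_map])
  rw [inner_neg_right] at this
  linarith

noncomputable def dualSeminorm : Seminorm ℝ E :=
  .ofSMulLE (dualNorm p)
    (le_antisymm (dualNorm_le p fun a _ => by simp)
      (by simpa using inner_le_dualNorm hp 0 (a := 0) (by simp)))
    (fun u v => dualNorm_le p fun a ha => by
      rw [inner_add_left]
      exact add_le_add (inner_le_dualNorm hp u ha) (inner_le_dualNorm hp v ha))
    (fun c v => dualNorm_le p fun a ha => by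
      rw [real_inner_smul_left, Real.norm_eq_abs]
      exact (le_abs_self _).trans (by rw [abs_mul]; gcongr; exact abs_inner_le_dualNorm hp v ha))

theorem inner_le_dualNorm_mul (v a : E) : ⟪v, a⟫ ≤ dualNorm p v * p a := by
  rcases (apply_nonneg p a).eq_or_lt with h | h
  · simp [hp a h.symm]
  have h1 : p ((p a)⁻¹ • a) ≤ 1 := by
    rw [map_smul_eq_mul, Real.norm_eq_abs, abs_inv, abs_of_pos h, inv_mul_cancel₀ h.ne']
  have := inner_le_dualNorm hp v h1
  rwa [real_inner_smul_right, inv_mul_le_iff₀ h, mul_comm] at this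

end DualNorm

section StrongConvexity

variable {E : Type*} [NormedAddCommGroup E] [InnerProductSpace ℝ E]

/-- Strong convexity with modulus `μ` relative to an arbitrary `p`, whereas Mathlib's
`StrongConvexOn` is relative to the ambient norm. -/
def IsStronglyConvexWrt (p : E → ℝ) (μ : ℝ) (g : E → ℝ) : Prop :=
  ∀ (a b : E) (θ : ℝ), 0 ≤ θ → θ ≤ 1 →
    g (θ • a + (1 - θ) • b) ≤ θ * g a + (1 - θ) * g b - μ * θ * (1 - θ) / 2 * p (a - b) ^ 2

variable {p : E → ℝ} {μ : ℝ}

theorem IsStronglyConvexWrt.inner_add_mul {ψ : E → ℝ} (hψ : IsStronglyConvexWrt p μ ψ) (z : E)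
    {c : ℝ} (hc : 0 ≤ c) : IsStronglyConvexWrt p (c * μ) fun x => ⟪z, x⟫ + c * ψ x := by
  intro a b θ hθ0 hθ1
  have := mul_le_mul_of_nonneg_left (hψ a b θ hθ0 hθ1) hc
  simp only [inner_add_right, real_inner_smul_right]
  linarith

theorem IsStronglyConvexWrt.add_sq_le_of_isMinOn {g : E → ℝ} {X : Set E} {x u : E}
    (hg : IsStronglyConvexWrt p μ g) (hX : Convex ℝ X) (hx : x ∈ X) (hu : u ∈ X)
    (hmin : IsMinOn g X x) : g x + μ / 2 * p (u - x) ^ 2 ≤ g u := by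
  have hlim : Tendsto (fun θ : ℝ => g x + μ * (1 - θ) / 2 * p (u - x) ^ 2) (𝓝[>] 0)
      (𝓝 (g x + μ / 2 * p (u - x) ^ 2)) := by
    have : Continuous fun θ : ℝ => g x + μ * (1 - θ) / 2 * p (u - x) ^ 2 := by fun_prop
    simpa using this.continuousWithinAt.tendsto (x := 0) (s := Set.Ioi 0)
  refine le_of_tendsto hlim ?_
  filter_upwards [Ioo_mem_nhdsGT one_pos] with θ ⟨hθ0, hθ1⟩
  have hmid : g x ≤ g (θ • u + (1 - θ) • x) :=
    hmin (hX hu hx hθ0.le (by linarith) (by ring))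
  have hconv := hg u x θ hθ0.le hθ1.le
  have : θ * (g x + μ * (1 - θ) / 2 * p (u - x) ^ 2) ≤ θ * g u := by linarith
  exact le_of_mul_le_mul_left this hθ0

end StrongConvexity

theorem ConvexOn.add_inner_le_of_hasGradientAt {F : Type*} [NormedAddCommGroup F]
    [InnerProductSpace ℝ F] [CompleteSpace F] {f : F → ℝ} {f' z : F}
    (hf : ConvexOn ℝ Set.univ f) (hf' : HasGradientAt f f' z) (u : F) :
    f z + ⟪f', u - z⟫ ≤ f u := by
  set line : ℝ →ᵃ[ℝ] F := AffineMap.lineMap z u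
  have hline : ConvexOn ℝ Set.univ (f ∘ line) := hf.comp_affineMap line
  have hderiv : HasDerivAt (f ∘ line) ⟪f', u - z⟫ 0 := by
    have := hasGradientAt_iff_hasFDerivAt.mp hf'
    rw [← AffineMap.lineMap_apply_zero (k := ℝ) z u] at this
    simpa using this.comp_hasDerivAt (0 : ℝ) AffineMap.hasDerivAt_lineMap
  have := hline.le_slope_of_hasDerivAt (Set.mem_univ 0) (Set.mem_univ 1) one_pos hderiv
  simp only [slope_def_field, Function.comp_apply, sub_zero, div_one, line,
    AffineMap.lineMap_apply_zero, AffineMap.lineMap_apply_one] at this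
  linarith

section Regret

variable {E : Type*} [NormedAddCommGroup E] [InnerProductSpace ℝ E] [FiniteDimensional ℝ E]
  {p : Seminorm ℝ E} {X : Set E} {ψ : E → ℝ} {α : ℝ} {Proj : E → E}

theorem avg_sub_avg_le_of_hasGradientAt {ι : Type*} [Fintype ι] [Nonempty ι]
    (hp : ∀ a, p a = 0 → a = 0) {f : ι → E → ℝ} {grad : ι → E} {x x' : E} {L : ℝ}
    (hf : ∀ i, ConvexOn ℝ Set.univ (f i)) (hgrad : ∀ i, HasGradientAt (f i) (grad i) x)
    (hL : ∀ i, dualNorm p (grad i) ≤ L) :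
    (1 / (Fintype.card ι : ℝ)) * ∑ i, f i x - (1 / (Fintype.card ι : ℝ)) * ∑ i, f i x'
      ≤ L * p (x - x') := by
  have hterm : ∀ i, f i x - f i x' ≤ L * p (x - x') := fun i => by
    have h₁ := (hf i).add_inner_le_of_hasGradientAt (hgrad i) x'
    have h₂ := inner_le_dualNorm_mul hp (grad i) (x - x')
    have h₃ := mul_le_mul_of_nonneg_right (hL i) (apply_nonneg p (x - x'))
    rw [← neg_sub x x', inner_neg_right] at h₁
    linarith
  rw [← mul_sub, ← sum_sub_distrib, one_div, inv_mul_le_iff₀ (by simp [Fintype.card_pos])]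
  simpa using sum_le_sum fun i (_ : i ∈ univ) => hterm i

/-- Adding the quadratic growth of the two objectives at their minimizers gives
`p (Proj z₁ - Proj z₂) ^ 2 / α ≤ ⟪z₁ - z₂, Proj z₂ - Proj z₁⟫`; then use Hölder. -/
theorem map_sub_regularizedProj_le (hp : ∀ a, p a = 0 → a = 0) (hX : Convex ℝ X)
    (hψ : IsStronglyConvexWrt p 1 ψ) (hα : 0 < α) (hProjX : ∀ z, Proj z ∈ X)
    (hProjMin : ∀ z, ∀ u ∈ X, ⟪z, Proj z⟫ + (1 / α) * ψ (Proj z) ≤ ⟪z, u⟫ + (1 / α) * ψ u)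
    (z₁ z₂ : E) : p (Proj z₁ - Proj z₂) ≤ α * dualNorm p (z₁ - z₂) := by
  have hgrowth : ∀ z, ∀ u ∈ X,
      ⟪z, Proj z⟫ + (1 / α) * ψ (Proj z) + 1 / α / 2 * p (u - Proj z) ^ 2
        ≤ ⟪z, u⟫ + (1 / α) * ψ u := fun z u hu => by
    simpa using (hψ.inner_add_mul z (one_div_nonneg.mpr hα.le)).add_sq_le_of_isMinOn hX
      (hProjX z) hu (isMinOn_iff.mpr (hProjMin z))
  have h₁ := hgrowth z₁ (Proj z₂) (hProjX z₂)
  have h₂ := hgrowth z₂ (Proj z₁) (hProjX z₁)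
  have hHolder := inner_le_dualNorm_mul hp (z₁ - z₂) (Proj z₂ - Proj z₁)
  rw [map_sub_rev p] at h₁ hHolder
  simp only [inner_sub_left, inner_sub_right] at hHolder
  have hsq : 1 / α * p (Proj z₁ - Proj z₂) ^ 2
      ≤ dualNorm p (z₁ - z₂) * p (Proj z₁ - Proj z₂) := by
    linarith
  rw [one_div, inv_mul_le_iff₀ hα, ← mul_assoc] at hsq
  have hdual : 0 ≤ dualNorm p (z₁ - z₂) := apply_nonneg (dualSeminorm hp) (z₁ - z₂)
  nlinarith [apply_nonneg p (Proj z₁ - Proj z₂), mul_nonneg hα.le hdual]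

theorem avg_sub_avg_le_of_regularizedProj {ι : Type*} [Fintype ι] [Nonempty ι]
    (hp : ∀ a, p a = 0 → a = 0) (hX : Convex ℝ X) (hψ : IsStronglyConvexWrt p 1 ψ) (hα : 0 < α)
    (hProjX : ∀ z, Proj z ∈ X)
    (hProjMin : ∀ z, ∀ u ∈ X, ⟪z, Proj z⟫ + (1 / α) * ψ (Proj z) ≤ ⟪z, u⟫ + (1 / α) * ψ u)
    {f : ι → E → ℝ} {grad : ι → E} {z z' : E} (x' : E) {L : ℝ} (hL0 : 0 ≤ L)
    (hf : ∀ i, ConvexOn ℝ Set.univ (f i)) (hgrad : ∀ i, HasGradientAt (f i) (grad i) (Proj z))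
    (hL : ∀ i, dualNorm p (grad i) ≤ L) :
    (1 / (Fintype.card ι : ℝ)) * ∑ i, f i (Proj z) - (1 / (Fintype.card ι : ℝ)) * ∑ i, f i x'
      ≤ L * (α * dualNorm p (z - z')) + L * p (Proj z' - x') := by
  calc _ ≤ L * p (Proj z - x') := avg_sub_avg_le_of_hasGradientAt hp hf hgrad hL
    _ ≤ L * (p (Proj z - Proj z') + p (Proj z' - x')) := by
        gcongr
        exact (sub_add_sub_cancel _ (Proj z') _).symm ▸ map_add_le_add p _ _
    _ ≤ L * (α * dualNorm p (z - z')) + L * p (Proj z' - x') := by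
        rw [mul_add]
        gcongr
        exact map_sub_regularizedProj_le hp hX hψ hα hProjX hProjMin z z'

end Regret

theorem Seminorm.map_sum_le {M κ : Type*} [AddCommGroup M] [Module ℝ M] (q : Seminorm ℝ M)
    (s : Finset κ) (v : κ → M) : q (∑ k ∈ s, v k) ≤ ∑ k ∈ s, q (v k) :=
  Finset.le_sum_of_subadditive q (map_zero q).le (map_add_le_add q) s v

section Consensus

variable {ι M : Type*} [Fintype ι] [DecidableEq ι] [AddCommGroup M] [Module ℝ M]
  {P : Matrix ι ι ℝ} {π : ι → ℝ}

theorem Matrix.sum_mul_pow_apply_of_stationary (hπ : ∀ j, ∑ i, π i * P i j = π j) (k : ℕ)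
    (j : ι) : ∑ i, π i * (P ^ k) i j = π j := by
  have hP : Matrix.vecMul π P = π := funext hπ
  have : Matrix.vecMul π (P ^ k) = π := by
    induction k with
    | zero => simp
    | succ k ih => rw [pow_succ, ← Matrix.vecMul_vecMul, ih, hP]
  exact congrFun this j

variable {y g : ι → ℕ → M}

theorem consensus_eq_sum_pow_smul (hy0 : ∀ i, y i 0 = 0)
    (hy : ∀ i t, y i (t + 1) = ∑ j, P i j • y j t + g i t) (t : ℕ) (i : ι) :
    y i t = ∑ s ∈ range t, ∑ l, (P ^ (t - 1 - s)) i l • g l s := by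
  induction t generalizing i with
  | zero => simp [hy0]
  | succ t ih =>
    have hpow : ∀ s ∈ range t, ∑ j, ∑ l, P i j • (P ^ (t - 1 - s)) j l • g l s
        = ∑ l, (P ^ (t + 1 - 1 - s)) i l • g l s := by
      intro s hs
      obtain ⟨k, rfl⟩ := Nat.exists_eq_add_of_lt (mem_range.mp hs)
      simp only [smul_smul]
      rw [Finset.sum_comm]
      simp only [← Finset.sum_smul, show s + k + 1 + 1 - 1 - s = k + 1 by omega,
        show s + k + 1 - 1 - s = k by omega, pow_succ', Matrix.mul_apply]
    simp only [hy, ih, Finset.smul_sum]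
    rw [Finset.sum_comm, Finset.sum_congr rfl hpow, sum_range_succ]
    simp [Matrix.one_apply, ite_smul]

theorem consensus_sub_sum_smul_eq (hy0 : ∀ i, y i 0 = 0)
    (hy : ∀ i t, y i (t + 1) = ∑ j, P i j • y j t + g i t)
    (hπ : ∀ j, ∑ i, π i * P i j = π j) (t : ℕ) (j : ι) :
    y j t - ∑ i, π i • y i t = ∑ s ∈ range t, ∑ l, ((P ^ (t - 1 - s)) j l - π l) • g l s := by
  have havg : ∑ i, π i • y i t = ∑ s ∈ range t, ∑ l, π l • g l s := by
    simp only [consensus_eq_sum_pow_smul hy0 hy t, Finset.smul_sum, smul_smul]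
    rw [Finset.sum_comm]
    refine Finset.sum_congr rfl fun s _ => ?_
    rw [Finset.sum_comm]
    simp only [← Finset.sum_smul, Matrix.sum_mul_pow_apply_of_stationary hπ]
  rw [havg, consensus_eq_sum_pow_smul hy0 hy t j]
  simp only [sub_smul, Finset.sum_sub_distrib]

theorem seminorm_consensus_sub_le (q : Seminorm ℝ M) (hy0 : ∀ i, y i 0 = 0)
    (hy : ∀ i t, y i (t + 1) = ∑ j, P i j • y j t + g i t)
    (hπ : ∀ j, ∑ i, π i * P i j = π j) {G : ℝ} (t : ℕ) (hg : ∀ l, ∀ s < t, q (g l s) ≤ G)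
    (j : ι) :
    q (y j t - ∑ i, π i • y i t) ≤ G * ∑ k ∈ range t, ∑ l, |(P ^ k) j l - π l| := by
  calc q (y j t - ∑ i, π i • y i t)
      ≤ ∑ s ∈ range t, ∑ l, |(P ^ (t - 1 - s)) j l - π l| * G := by
        rw [consensus_sub_sum_smul_eq hy0 hy hπ]
        refine (q.map_sum_le _ _).trans (Finset.sum_le_sum fun s hs => ?_)
        refine (q.map_sum_le _ _).trans (Finset.sum_le_sum fun l _ => ?_)
        rw [map_smul_eq_mul, Real.norm_eq_abs]
        exact mul_le_mul_of_nonneg_left (hg l s (mem_range.mp hs)) (abs_nonneg _)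
    _ = G * ∑ k ∈ range t, ∑ l, |(P ^ k) j l - π l| := by
        rw [← Finset.sum_range_reflect (fun k => ∑ l, |(P ^ k) j l - π l|) t]
        simp_rw [Finset.mul_sum, mul_comm G]

end Consensus

section Mixing

theorem pow_pow_div_mul_pow_le_pow {q : ℝ} (hq0 : 0 ≤ q) (hq1 : q ≤ 1) {ν : ℕ} (hν : 0 < ν)
    (k : ℕ) : (q ^ ν) ^ (k / ν) * q ^ ν ≤ q ^ k := by
  calc (q ^ ν) ^ (k / ν) * q ^ ν ≤ (q ^ ν) ^ (k / ν) * q ^ (k % ν) := by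
        exact mul_le_mul_of_nonneg_left (pow_le_pow_of_le_one hq0 hq1 (Nat.mod_lt k hν).le)
          (by positivity)
    _ = q ^ k := by rw [← pow_mul, ← pow_add, Nat.div_add_mod]

variable {ι : Type*} [Fintype ι] [DecidableEq ι] {P : Matrix ι ι ℝ} {π : ι → ℝ}

theorem sum_abs_one_sub_le_two (hπ0 : ∀ i, 0 ≤ π i) (hπ1 : ∑ i, π i = 1) (i : ι) :
    ∑ l, |(1 : Matrix ι ι ℝ) i l - π l| ≤ 2 := by
  have hδ (l : ι) : |(1 : Matrix ι ι ℝ) i l| = (1 : Matrix ι ι ℝ) i l := by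
    rw [Matrix.one_apply]
    split_ifs <;> simp
  calc ∑ l, |(1 : Matrix ι ι ℝ) i l - π l| ≤ ∑ l, ((1 : Matrix ι ι ℝ) i l + π l) :=
        sum_le_sum fun l _ => (abs_sub _ _).trans_eq (by rw [hδ, abs_of_nonneg (hπ0 l)])
    _ = 2 := by simp [Matrix.one_apply, sum_add_distrib, hπ1, one_add_one_eq_two]

/-- The `k = 0` term is at most `2`; for `k ≥ 1`, `γ ^ (k / ν) ≤ ρ ^ k / γ` with
`ρ = γ ^ (1 / ν)`, and the geometric series in `ρ` is summed. -/
theorem sum_range_sum_abs_pow_sub_le (hπ0 : ∀ i, 0 ≤ π i) (hπ1 : ∑ i, π i = 1) {γ : ℝ}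
    (hγ0 : 0 < γ) (hγ1 : γ < 1) {ν : ℕ} (hν : 0 < ν)
    (hmix : ∀ k : ℕ, 1 ≤ k → ∀ i j, |(P ^ k) i j - π j| ≤ γ ^ (k / ν)) (i : ι) (t : ℕ) :
    ∑ k ∈ range t, ∑ l, |(P ^ k) i l - π l| ≤
      2 + Fintype.card ι / (γ * (1 - γ ^ ((1 : ℝ) / ν))) := by
  set ρ := γ ^ ((1 : ℝ) / ν)
  have hρ0 : 0 ≤ ρ := by positivity
  have hρ1 : ρ < 1 := Real.rpow_lt_one hγ0.le hγ1 (by positivity)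
  have hργ : ρ ^ ν = γ := by
    simp only [ρ, one_div]
    exact Real.rpow_inv_natCast_pow hγ0.le hν.ne'
  have hterm : ∀ k, ∑ l, |(P ^ (k + 1)) i l - π l| ≤ Fintype.card ι / γ * ρ ^ k := by
    intro k
    have hpow := pow_pow_div_mul_pow_le_pow hρ0 hρ1.le hν (k + 1)
    rw [hργ, pow_succ] at hpow
    calc ∑ l, |(P ^ (k + 1)) i l - π l| ≤ ∑ _l : ι, γ ^ ((k + 1) / ν) :=
          sum_le_sum fun l _ => hmix _ (by omega) i l
      _ = Fintype.card ι * γ ^ ((k + 1) / ν) := by simp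
      _ ≤ Fintype.card ι / γ * ρ ^ k := by
          rw [div_mul_eq_mul_div, le_div_iff₀ hγ0, mul_assoc]
          gcongr
          exact hpow.trans (mul_le_of_le_one_right (pow_nonneg hρ0 k) hρ1.le)
  have hgeom : ∀ t, ∑ k ∈ range t, ρ ^ k ≤ 1 / (1 - ρ) := fun t => by
    have := geom_sum_Ico_le_of_lt_one (m := 0) (n := t) hρ0 hρ1
    rwa [← range_eq_Ico, pow_zero] at this
  cases t with
  | zero =>
    have : 0 < 1 - ρ := by linarith
    simp only [range_zero, sum_empty]
    positivity
  | succ t =>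
    rw [sum_range_succ', pow_zero, add_comm]
    calc ∑ l, |(1 : Matrix ι ι ℝ) i l - π l| + ∑ k ∈ range t, ∑ l, |(P ^ (k + 1)) i l - π l|
        ≤ 2 + ∑ k ∈ range t, Fintype.card ι / γ * ρ ^ k :=
          add_le_add (sum_abs_one_sub_le_two hπ0 hπ1 i) (sum_le_sum fun k _ => hterm k)
      _ ≤ 2 + Fintype.card ι / γ * (1 / (1 - ρ)) := by
          rw [← mul_sum]
          gcongr
          exact hgeom t
      _ = 2 + Fintype.card ι / (γ * (1 - ρ)) := by rw [div_mul_div_comm, mul_one]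

end Mixing

theorem dodwda_local_dynamic_regret_general {m : ℕ} (n T : ℕ) (hT : 1 ≤ T)
    (β α : ℝ) (hβ : 0 < β) (hα : α = β / T)
    -- `P` is row-stochastic with stationary distribution `π ∈ (0,1)^n`
    (P : Matrix (Fin n) (Fin n) ℝ)
    (π : Fin n → ℝ) (hπ0 : ∀ i, 0 < π i)
    (hπsum : ∑ i, π i = 1) (hπstat : ∀ j, ∑ i, π i * P i j = π j)
    -- geometric mixing of the matrix powers of `P` (`k / ν` is `⌊k/ν⌋`)
    (γ : ℝ) (hγ0 : 0 < γ) (hγ1 : γ < 1) (ν : ℕ) (hν : 1 ≤ ν)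
    (hmix : ∀ k : ℕ, 1 ≤ k → ∀ i j, |(P ^ k) i j - π j| ≤ γ ^ (k / ν))
    -- `X` is nonempty, compact, and convex
    (X : Set (EuclideanSpace ℝ (Fin m)))
    (hXcv : Convex ℝ X)
    -- `N` is a norm on `ℝ^m` and `Nd` its dual norm
    (N : EuclideanSpace ℝ (Fin m) → ℝ)
    (hNtri : ∀ a b, N (a + b) ≤ N a + N b)
    (hNsmul : ∀ (c : ℝ) (a : EuclideanSpace ℝ (Fin m)), N (c • a) = |c| * N a)
    (hNdef : ∀ a, N a = 0 ↔ a = 0)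
    (Nd : EuclideanSpace ℝ (Fin m) → ℝ)
    (hNd : ∀ v, Nd v = sSup {r : ℝ | ∃ a, N a ≤ 1 ∧ r = ⟪v, a⟫})
    -- `ψ` is 1-strongly convex with respect to `N`
    (ψ : EuclideanSpace ℝ (Fin m) → ℝ)
    (hψ : ∀ (a b : EuclideanSpace ℝ (Fin m)) (θ : ℝ), 0 ≤ θ → θ ≤ 1 →
      ψ (θ • a + (1 - θ) • b) ≤ θ * ψ a + (1 - θ) * ψ b - θ * (1 - θ) / 2 * (N (a - b)) ^ 2)
    -- `Proj` is the `ψ`-regularized projection onto `X` with stepsize `α`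
    (Proj : EuclideanSpace ℝ (Fin m) → EuclideanSpace ℝ (Fin m))
    (hProjX : ∀ z, Proj z ∈ X)
    (hProjMin : ∀ z, ∀ u ∈ X,
      ⟪z, Proj z⟫ + (1 / α) * ψ (Proj z) ≤ ⟪z, u⟫ + (1 / α) * ψ u)
    -- the losses: convex, differentiable, with dual-norm-bounded gradients on `X`
    (L : ℝ)
    (f : Fin n → ℕ → EuclideanSpace ℝ (Fin m) → ℝ)
    (grad : Fin n → ℕ → EuclideanSpace ℝ (Fin m) → EuclideanSpace ℝ (Fin m))
    (hconv : ∀ (i : Fin n) (t : ℕ), t ≤ T + 1 → ConvexOn ℝ Set.univ (f i t))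
    (hdiff : ∀ (i : Fin n) (t : ℕ), t ≤ T + 1 → ∀ z, HasGradientAt (f i t) (grad i t z) z)
    (hgradbd : ∀ (i : Fin n) (t : ℕ), t ≤ T + 1 → ∀ z ∈ X, Nd (grad i t z) ≤ L)
    -- the D-ODWDA iterates
    (y x : Fin n → ℕ → EuclideanSpace ℝ (Fin m))
    (hy0 : ∀ i, y i 0 = 0) (hx0 : ∀ i, x i 0 ∈ X)
    (hyrec : ∀ i t, y i (t + 1) = (∑ j, P i j • y j t) + grad i t (x i t))
    (hxrec : ∀ i t, x i (t + 1) = Proj (y i (t + 1)))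
    -- the weighted dual average
    (ybar : ℕ → EuclideanSpace ℝ (Fin m))
    (hybar : ∀ t, ybar t = ∑ i, π i • y i t)
    -- `x*_t` minimizes `f_t = (1/n) Σ_i f_{i,t}` over `X`
    (xstar : ℕ → EuclideanSpace ℝ (Fin m))
    -- (i) a uniform bound on `‖ȳ_t‖_*`
    (D : ℝ)
    (hybarbd : ∀ t : ℕ, 1 ≤ t → t ≤ T → Nd (ybar t) ≤ D)
    -- (ii) dual representatives of the round optima, dual-norm-bounded by `Y`
    (Y : ℝ)
    (hYstar : ∀ (i : Fin n) (t : ℕ), 2 ≤ t → t ≤ T + 1 →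
      ∃ ystar : EuclideanSpace ℝ (Fin m), xstar t = Proj ystar ∧ Nd ystar ≤ Y) :
    -- the local dynamic regret bound, for every agent `j`
    ∀ j : Fin n,
      ∑ t ∈ Icc 1 T,
          ((1 / (n : ℝ)) * ∑ i, f i t (x j t) - (1 / (n : ℝ)) * ∑ i, f i t (xstar t))
        ≤ β * L ^ 2 * ((n : ℝ) / (γ * (1 - γ ^ ((1 : ℝ) / (ν : ℝ)))) + 2)
          + β * L * (D + Y)
          + L * ∑ t ∈ Icc 1 T, N (xstar (t + 1) - xstar t) := by
  intro j
  obtain ⟨p, rfl⟩ : ∃ p : Seminorm ℝ (EuclideanSpace ℝ (Fin m)), ⇑p = N :=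
    ⟨.of N hNtri fun c a => by rw [hNsmul, Real.norm_eq_abs], rfl⟩
  have hp (a) : p a = 0 → a = 0 := (hNdef a).mp
  obtain rfl : Nd = dualSeminorm hp := funext hNd
  have hψ' : IsStronglyConvexWrt p 1 ψ := fun a b θ h₀ h₁ => by simpa using hψ a b θ h₀ h₁
  have hα0 : 0 < α := hα ▸ div_pos hβ (by exact_mod_cast hT)
  have hxX (i : Fin n) : ∀ t, x i t ∈ X
    | 0 => hx0 i
    | t + 1 => hxrec i t ▸ hProjX _
  have hL : 0 ≤ L := (apply_nonneg _ _).trans (hgradbd j 0 (by omega) _ (hx0 j))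
  set C := L * (2 + n / (γ * (1 - γ ^ ((1 : ℝ) / ν))))
  have hcons (t : ℕ) (htT : t ≤ T) : dualSeminorm hp (y j t - ybar t) ≤ C := by
    rw [hybar]
    refine (seminorm_consensus_sub_le _ hy0 hyrec hπstat t
      (fun l s hs => hgradbd l s (by omega) _ (hxX l s)) j).trans ?_
    have := mul_le_mul_of_nonneg_left
      (sum_range_sum_abs_pow_sub_le (fun i => (hπ0 i).le) hπsum hγ0 hγ1 hν hmix j t) hL
    rwa [Fintype.card_fin] at this
  have hround : ∀ t ∈ Icc 1 T,
      (1 / (n : ℝ)) * ∑ i, f i t (x j t) - (1 / (n : ℝ)) * ∑ i, f i t (xstar t)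
        ≤ L * (α * (C + D + Y)) + L * p (xstar (t + 1) - xstar t) := by
    intro t ht
    obtain ⟨ht1, htT⟩ := mem_Icc.mp ht
    obtain ⟨s, rfl⟩ := Nat.exists_eq_add_of_le' ht1
    obtain ⟨ys, hxs, hys⟩ := hYstar j (s + 1 + 1) (by omega) (by omega)
    have hdual : dualSeminorm hp (y j (s + 1) - ys) ≤ C + D + Y := by
      have h₁ := map_sub_le_add (dualSeminorm hp) (y j (s + 1) - ybar (s + 1) + ybar (s + 1)) ys
      have h₂ := map_add_le_add (dualSeminorm hp) (y j (s + 1) - ybar (s + 1)) (ybar (s + 1))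
      rw [sub_add_cancel] at h₁ h₂
      linarith [hcons (s + 1) htT, hybarbd (s + 1) ht1 htT]
    have : Nonempty (Fin n) := ⟨j⟩
    have hround := avg_sub_avg_le_of_regularizedProj (ι := Fin n) (z := y j (s + 1)) (z' := ys)
      hp hXcv hψ' hα0 hProjX hProjMin (xstar (s + 1)) hL (fun i => hconv i (s + 1) (by omega))
      (fun i => hxrec j s ▸ hdiff i (s + 1) (by omega) _)
      (fun i => hgradbd i (s + 1) (by omega) _ (hxX j (s + 1)))
    rw [← hxrec, ← hxs, Fintype.card_fin] at hround
    refine hround.trans ?_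
    gcongr
    exact hdual
  calc _ ≤ ∑ t ∈ Icc 1 T, (L * (α * (C + D + Y)) + L * p (xstar (t + 1) - xstar t)) :=
        sum_le_sum hround
    _ = T * (L * (α * (C + D + Y))) + L * ∑ t ∈ Icc 1 T, p (xstar (t + 1) - xstar t) := by
        rw [sum_add_distrib, sum_const, Nat.card_Icc, add_tsub_cancel_right, nsmul_eq_mul,
          mul_sum]
    _ = _ := by
        rw [hα]
        simp only [C]
        field_simp
        ring

/-- **Corollary 1 (local dynamic regret bound for D-ODWDA).**
Under the stated assumptions on the network matrix `P` (row-stochastic, stationary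
distribution `π ∈ (0,1)^n`, geometric mixing with constants `γ ∈ (0,1)` and `ν ≥ 1`),
the decision set `X` (nonempty, compact, convex), the regularizer `ψ` (1-strongly convex
w.r.t. the norm `N` with dual norm `Nd`), the losses `f_{i,t}` (convex, differentiable,
with gradients dual-norm-bounded by `L` on `X`), the D-ODWDA iterates with constant
stepsize `α = β/T`, a uniform bound `D` on `‖ȳ_t‖_*`, and a bound `Y` on dual
representatives of the round optima `x*_t`, for every agent `j` the local dynamic regret satisfies
`R_T(j) ≤ βL²(n/(γ(1 − γ^{1/ν})) + 2) + βL(D + Y) + L·V_T`. -/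
theorem dodwda_local_dynamic_regret {m : ℕ} (n T : ℕ) (hn : 1 ≤ n) (hT : 1 ≤ T)
    (β α : ℝ) (hβ : 0 < β) (hα : α = β / T)
    -- `P` is row-stochastic with stationary distribution `π ∈ (0,1)^n`
    (P : Matrix (Fin n) (Fin n) ℝ)
    (hPnn : ∀ i j, 0 ≤ P i j) (hProw : ∀ i, ∑ j, P i j = 1)
    (π : Fin n → ℝ) (hπ0 : ∀ i, 0 < π i) (hπ1 : ∀ i, π i < 1)
    (hπsum : ∑ i, π i = 1) (hπstat : ∀ j, ∑ i, π i * P i j = π j)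
    -- geometric mixing of the matrix powers of `P` (`k / ν` is `⌊k/ν⌋`)
    (γ : ℝ) (hγ0 : 0 < γ) (hγ1 : γ < 1) (ν : ℕ) (hν : 1 ≤ ν)
    (hmix : ∀ k : ℕ, 1 ≤ k → ∀ i j, |(P ^ k) i j - π j| ≤ γ ^ (k / ν))
    -- `X` is nonempty, compact, and convex
    (X : Set (EuclideanSpace ℝ (Fin m)))
    (hXne : X.Nonempty) (hXcp : IsCompact X) (hXcv : Convex ℝ X)
    -- `N` is a norm on `ℝ^m` and `Nd` its dual norm
    (N : EuclideanSpace ℝ (Fin m) → ℝ)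
    (hNtri : ∀ a b, N (a + b) ≤ N a + N b)
    (hNsmul : ∀ (c : ℝ) (a : EuclideanSpace ℝ (Fin m)), N (c • a) = |c| * N a)
    (hNdef : ∀ a, N a = 0 ↔ a = 0)
    (Nd : EuclideanSpace ℝ (Fin m) → ℝ)
    (hNd : ∀ v, Nd v = sSup {r : ℝ | ∃ a, N a ≤ 1 ∧ r = ⟪v, a⟫})
    -- `ψ` is 1-strongly convex with respect to `N`
    (ψ : EuclideanSpace ℝ (Fin m) → ℝ)
    (hψ : ∀ (a b : EuclideanSpace ℝ (Fin m)) (θ : ℝ), 0 ≤ θ → θ ≤ 1 →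
      ψ (θ • a + (1 - θ) • b) ≤ θ * ψ a + (1 - θ) * ψ b - θ * (1 - θ) / 2 * (N (a - b)) ^ 2)
    -- `Proj` is the `ψ`-regularized projection onto `X` with stepsize `α`
    (Proj : EuclideanSpace ℝ (Fin m) → EuclideanSpace ℝ (Fin m))
    (hProjX : ∀ z, Proj z ∈ X)
    (hProjMin : ∀ z, ∀ u ∈ X,
      ⟪z, Proj z⟫ + (1 / α) * ψ (Proj z) ≤ ⟪z, u⟫ + (1 / α) * ψ u)
    -- the losses: convex, differentiable, with dual-norm-bounded gradients on `X`
    (L : ℝ)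
    (f : Fin n → ℕ → EuclideanSpace ℝ (Fin m) → ℝ)
    (grad : Fin n → ℕ → EuclideanSpace ℝ (Fin m) → EuclideanSpace ℝ (Fin m))
    (hconv : ∀ (i : Fin n) (t : ℕ), t ≤ T + 1 → ConvexOn ℝ Set.univ (f i t))
    (hdiff : ∀ (i : Fin n) (t : ℕ), t ≤ T + 1 → ∀ z, HasGradientAt (f i t) (grad i t z) z)
    (hgradbd : ∀ (i : Fin n) (t : ℕ), t ≤ T + 1 → ∀ z ∈ X, Nd (grad i t z) ≤ L)
    -- the D-ODWDA iterates
    (y x : Fin n → ℕ → EuclideanSpace ℝ (Fin m))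
    (hy0 : ∀ i, y i 0 = 0) (hx0 : ∀ i, x i 0 ∈ X)
    (hyrec : ∀ i t, y i (t + 1) = (∑ j, P i j • y j t) + grad i t (x i t))
    (hxrec : ∀ i t, x i (t + 1) = Proj (y i (t + 1)))
    -- the weighted dual average
    (ybar : ℕ → EuclideanSpace ℝ (Fin m))
    (hybar : ∀ t, ybar t = ∑ i, π i • y i t)
    -- `x*_t` minimizes `f_t = (1/n) Σ_i f_{i,t}` over `X`
    (xstar : ℕ → EuclideanSpace ℝ (Fin m))
    (hxstarX : ∀ t : ℕ, 1 ≤ t → t ≤ T + 1 → xstar t ∈ X)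
    (hxstarMin : ∀ t : ℕ, 1 ≤ t → t ≤ T + 1 → ∀ u ∈ X,
      (1 / (n : ℝ)) * ∑ i, f i t (xstar t) ≤ (1 / (n : ℝ)) * ∑ i, f i t u)
    -- (i) a uniform bound on `‖ȳ_t‖_*`
    (D : ℝ) (hD : 0 ≤ D)
    (hybarbd : ∀ t : ℕ, 1 ≤ t → t ≤ T → Nd (ybar t) ≤ D)
    -- (ii) dual representatives of the round optima, dual-norm-bounded by `Y`
    (Y : ℝ) (hY : 0 ≤ Y)
    (hYstar : ∀ (i : Fin n) (t : ℕ), 2 ≤ t → t ≤ T + 1 →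
      ∃ ystar : EuclideanSpace ℝ (Fin m), xstar t = Proj ystar ∧ Nd ystar ≤ Y) :
    -- the local dynamic regret bound, for every agent `j`
    ∀ j : Fin n,
      ∑ t ∈ Icc 1 T,
          ((1 / (n : ℝ)) * ∑ i, f i t (x j t) - (1 / (n : ℝ)) * ∑ i, f i t (xstar t))
        ≤ β * L ^ 2 * ((n : ℝ) / (γ * (1 - γ ^ ((1 : ℝ) / (ν : ℝ)))) + 2)
          + β * L * (D + Y)
          + L * ∑ t ∈ Icc 1 T, N (xstar (t + 1) - xstar t) :=
  dodwda_local_dynamic_regret_general n T hT β α hβ hα P π hπ0 hπsum hπstat γ hγ0 hγ1 ν hν hmix X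
    hXcv N hNtri hNsmul hNdef Nd hNd ψ hψ Proj hProjX hProjMin L f grad hconv hdiff hgradbd y x hy0
    hx0 hyrec hxrec ybar hybar xstar D hybarbd Y hYstar
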